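/- arXiv:2011.14748 — 5 statements merged into one kernel-verified Lean document; each statement's English description precedes it below -/
import Mathlib

section
/- Let N_{B,v}, N_{B,h}, N_{R,v}, N_{R,h} be positive integers with N_B = N_{B,v}N_{B,h} and N_R = N_{R,v}N_{R,h}, let ψ₁,…,ψ_{N_R} be reals with ψ := (e^{iψ₁},…,e^{iψ_{N_R}})^T, and for indices l and i let Θ_l, Φ_l, Θ_{l,r}, Φ_{l,r}, Θ_{i,t}, Φ_{i,t} be reals. Define the cascaded direction vector a_{E}(l,i) := a_B(Θ_l,Φ_l) · (a_R(Θ_{l,r},Φ_{l,r})^H · diag(a_R(Θ_{i,t},Φ_{i,t})) · conj(ψ)), where a_B(Θ,Φ) := a_{N_{B,v}}(Θ)⊗a_{N_{B,h}}(Φ) and a_R(Θ,Φ) := a_{N_{R,v}}(Θ)⊗a_{N_{R,h}}(Φ). Suppose sin((Θ_{l₂}−Θ_{l₁})/2) ≠ 0 and sin((Φ_{l₂}−Φ_{l₁})/2) ≠ 0. Then a_E(l₁,i₁)^H a_E(l₂,i₂) = (α·e^{iβ}/(N_B·N_R²)) · Σ_{s=1}^{N_R} Σ_{c=1}^{N_R}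 e^{i(Ω_{l₁,i₁,s} − Ω_{l₂,i₂,c})}, where α = [sin((Θ_{l₂}−Θ_{l₁})N_{B,v}/2)·sin((Φ_{l₂}−Φ_{l₁})N_{B,h}/2)]/[sin((Θ_{l₂}−Θ_{l₁})/2)·sin((Φ_{l₂}−Φ_{l₁})/2)], β = (1/2)[(Θ_{l₂}−Θ_{l₁})(N_{B,v}−1) + (Φ_{l₂}−Φ_{l₁})(N_{B,h}−1)], and Ω_{l,i,s} := ψ_s + (v_{N_{R,h}}(s)−1)(Θ_{l,r}−Θ_{i,t}) + (h_{N_{R,h}}(s)−1)(Φ_{l,r}−Φ_{i,t}). -/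
/-- Normalized ULA steering vector: `a_N(Z) = (1/√N)·[1, e^{iZ}, …, e^{i(N−1)Z}]ᵀ`. -/
noncomputable def ula (N : ℕ) (Z : ℝ) : Fin N → ℂ :=
  fun n => ((1 / Real.sqrt N : ℝ) : ℂ) * Complex.exp (Complex.I * ((Z : ℂ) * ((n : ℕ) : ℂ)))

/-- Kronecker product of complex vectors: `(a ⊗ b)_{k·n + j} = a_k · b_j`. -/
noncomputable def kron {m n : ℕ} (a : Fin m → ℂ) (b : Fin n → ℂ) : Fin (m * n) → ℂ :=
  fun k => a (finProdFinEquiv.symm k).1 * b (finProdFinEquiv.symm k).2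

/-- UPA steering vector `a(Θ,Φ) := a_{N_v}(Θ) ⊗ a_{N_h}(Φ)`. -/
noncomputable def upa (Nv Nh : ℕ) (Θ Φ : ℝ) : Fin (Nv * Nh) → ℂ :=
  kron (ula Nv Θ) (ula Nh Φ)

/-- `v_M(n) := ⌈n/M⌉` (ceiling division, for positive `M`). -/
def vIdx (M n : ℕ) : ℕ := (n + M - 1) / M

/-- `h_M(n) := n − (⌈n/M⌉ − 1)·M`. -/
def hIdx (M n : ℕ) : ℕ := n - (vIdx M n - 1) * M

/-- Cascaded path direction vector
`a_E(l,i) = a_B(Θ_l,Φ_l)·(a_R(Θ_{l,r},Φ_{l,r})ᴴ · diag(a_R(Θ_{i,t},Φ_{i,t})) · conj(ψ))`,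
where `ψ = (e^{iψ₁},…,e^{iψ_{N_R}})ᵀ`. -/
noncomputable def casDir (NBv NBh NRv NRh : ℕ) (ψ : Fin (NRv * NRh) → ℝ)
    (Θl Φl Θlr Φlr Θit Φit : ℝ) : Fin (NBv * NBh) → ℂ :=
  fun nb => upa NBv NBh Θl Φl nb *
    ∑ s : Fin (NRv * NRh),
      (starRingEnd ℂ) (upa NRv NRh Θlr Φlr s) * upa NRv NRh Θit Φit s *
        (starRingEnd ℂ) (Complex.exp (Complex.I * (ψ s : ℂ)))

/-- Phase `Ω_{l,i,s}` seen by 1-based RIS element `s`. -/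
noncomputable def Ωph (NRh : ℕ) (ψs : ℝ) (s : ℕ) (Θlr Θit Φlr Φit : ℝ) : ℝ :=
  ψs + ((vIdx NRh s : ℝ) - 1) * (Θlr - Θit) + ((hIdx NRh s : ℝ) - 1) * (Φlr - Φit)


lemma two_I_sin (z : ℂ) :
    Complex.exp (z * Complex.I) - Complex.exp (-z * Complex.I) = 2 * Complex.sin z * Complex.I := by
  rw [Complex.exp_mul_I, show -z * Complex.I = (-z) * Complex.I by ring, Complex.exp_mul_I,
    Complex.cos_neg, Complex.sin_neg]
  ring

lemma exp_I_sub_one (θ : ℝ) :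
    Complex.exp (Complex.I * θ) - 1 =
      Complex.exp (Complex.I * ((θ / 2 : ℝ) : ℂ)) * (2 * (Real.sin (θ / 2) : ℂ) * Complex.I) := by
  have h := two_I_sin ((θ / 2 : ℝ) : ℂ)
  rw [Complex.ofReal_sin, ← h]
  rw [show Complex.I * (θ : ℂ) = ((θ/2 : ℝ) : ℂ) * Complex.I + ((θ/2 : ℝ) : ℂ) * Complex.I by
    push_cast; ring, Complex.exp_add,
    show Complex.I * ((θ/2:ℝ):ℂ) = ((θ/2:ℝ):ℂ) * Complex.I by ring]
  rw [show (-((θ/2:ℝ):ℂ) * Complex.I) = -(((θ/2:ℝ):ℂ) * Complex.I) by ring, Complex.exp_neg]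
  have hne := Complex.exp_ne_zero (((θ/2:ℝ):ℂ) * Complex.I)
  field_simp

lemma exp_ne_one_of_sin (x : ℝ) (hx : Real.sin (x / 2) ≠ 0) :
    Complex.exp (Complex.I * x) ≠ 1 := by
  intro h
  rw [Complex.exp_eq_one_iff] at h
  obtain ⟨n, hn⟩ := h
  have hI : Complex.I ≠ 0 := Complex.I_ne_zero
  have hx2 : (x : ℂ) = (n : ℂ) * (2 * Real.pi) := by
    have : Complex.I * (x:ℂ) = Complex.I * ((n:ℂ) * (2 * Real.pi)) := by
      rw [hn]; push_cast; ring
    exact mul_left_cancel₀ hI this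
  have hxr : x = (n : ℝ) * (2 * Real.pi) := by exact_mod_cast hx2
  apply hx
  rw [hxr, show (n:ℝ) * (2 * Real.pi) / 2 = (n:ℝ) * Real.pi by ring]
  exact Real.sin_int_mul_pi n

lemma dirichlet (N : ℕ) (x : ℝ) (hx : Real.sin (x / 2) ≠ 0) :
    ∑ n : Fin N, Complex.exp (Complex.I * ((x : ℂ) * ((n : ℕ) : ℂ))) =
      ((Real.sin (x * N / 2) / Real.sin (x / 2) : ℝ) : ℂ) *
        Complex.exp (Complex.I * ((x * ((N : ℝ) - 1) / 2 : ℝ) : ℂ)) := by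
  have hne1 : Complex.exp (Complex.I * x) ≠ 1 := exp_ne_one_of_sin x hx
  have hterm : ∀ n : ℕ, Complex.exp (Complex.I * ((x : ℂ) * (n : ℂ))) =
      Complex.exp (Complex.I * x) ^ n := by
    intro n
    rw [← Complex.exp_nat_mul]
    ring_nf
  calc ∑ n : Fin N, Complex.exp (Complex.I * ((x : ℂ) * ((n : ℕ) : ℂ)))
      = ∑ n : Fin N, Complex.exp (Complex.I * x) ^ (n : ℕ) :=
        Finset.sum_congr rfl fun n _ => hterm n
    _ = ∑ n ∈ Finset.range N, Complex.exp (Complex.I * x) ^ n :=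
        Fin.sum_univ_eq_sum_range (fun k => Complex.exp (Complex.I * x) ^ k) N
    _ = (Complex.exp (Complex.I * x) ^ N - 1) / (Complex.exp (Complex.I * x) - 1) :=
        geom_sum_eq hne1 N
    _ = (Complex.exp (Complex.I * (x * N : ℝ)) - 1) / (Complex.exp (Complex.I * x) - 1) := by
        rw [← hterm N]; push_cast; ring_nf
    _ = _ := by
        rw [exp_I_sub_one (x * N), exp_I_sub_one x]
        have h1 : Complex.exp (Complex.I * ((x/2 : ℝ):ℂ)) ≠ 0 := Complex.exp_ne_zero _
        have h2 : (Real.sin (x/2) : ℂ) ≠ 0 := by exact_mod_cast hx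
        have h3 : Complex.exp (Complex.I * ((x * N / 2 : ℝ):ℂ)) =
            Complex.exp (Complex.I * ((x * ((N : ℝ) - 1) / 2 : ℝ) : ℂ)) *
              Complex.exp (Complex.I * ((x/2 : ℝ):ℂ)) := by
          rw [← Complex.exp_add]
          congr 1
          push_cast
          ring
        rw [h3, Complex.ofReal_div]
        rw [mul_assoc, mul_div_assoc, mul_div_mul_left _ _ (Complex.exp_ne_zero _)]
        rw [mul_div_mul_right _ _ Complex.I_ne_zero,
          mul_div_mul_left _ _ (two_ne_zero (α := ℂ))]
        push_cast
        ring
lemma conj_ula_mul (N : ℕ) (Θ₁ Θ₂ : ℝ) (n : Fin N) :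
    (starRingEnd ℂ) (ula N Θ₁ n) * ula N Θ₂ n =
      (((N : ℝ)⁻¹ : ℝ) : ℂ) *
        Complex.exp (Complex.I * (((Θ₂ - Θ₁ : ℝ) : ℂ) * ((n : ℕ) : ℂ))) := by
  unfold ula
  rw [map_mul, ← Complex.exp_conj]
  simp only [map_mul, Complex.conj_I, Complex.conj_ofReal, map_natCast]
  rw [mul_mul_mul_comm, ← Complex.ofReal_mul, ← Complex.exp_add]
  congr 1
  · congr 1
    rw [div_mul_div_comm, one_mul, Real.mul_self_sqrt (Nat.cast_nonneg N), one_div]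
  · push_cast
    ring

lemma upa_inner (Nv Nh : ℕ) (Θ₁ Φ₁ Θ₂ Φ₂ : ℝ)
    (hΘ : Real.sin ((Θ₂ - Θ₁) / 2) ≠ 0) (hΦ : Real.sin ((Φ₂ - Φ₁) / 2) ≠ 0) :
    ∑ nb : Fin (Nv * Nh), (starRingEnd ℂ) (upa Nv Nh Θ₁ Φ₁ nb) * upa Nv Nh Θ₂ Φ₂ nb =
      ((Real.sin ((Θ₂ - Θ₁) * (Nv : ℝ) / 2) * Real.sin ((Φ₂ - Φ₁) * (Nh : ℝ) / 2) /
          (Real.sin ((Θ₂ - Θ₁) / 2) * Real.sin ((Φ₂ - Φ₁) / 2)) : ℝ) : ℂ) *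
        Complex.exp (Complex.I *
          ((1 / 2 * ((Θ₂ - Θ₁) * ((Nv : ℝ) - 1) + (Φ₂ - Φ₁) * ((Nh : ℝ) - 1)) : ℝ) : ℂ)) /
        ((Nv * Nh : ℕ) : ℂ) := by
  rw [← Equiv.sum_comp finProdFinEquiv
    (fun nb => (starRingEnd ℂ) (upa Nv Nh Θ₁ Φ₁ nb) * upa Nv Nh Θ₂ Φ₂ nb)]
  have hbody : ∀ p : Fin Nv × Fin Nh,
      (starRingEnd ℂ) (upa Nv Nh Θ₁ Φ₁ (finProdFinEquiv p)) * upa Nv Nh Θ₂ Φ₂ (finProdFinEquiv p) =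
        ((starRingEnd ℂ) (ula Nv Θ₁ p.1) * ula Nv Θ₂ p.1) *
          ((starRingEnd ℂ) (ula Nh Φ₁ p.2) * ula Nh Φ₂ p.2) := by
    intro p
    simp only [upa, kron, Equiv.symm_apply_apply, map_mul]
    ring
  rw [Finset.sum_congr rfl fun p _ => hbody p]
  rw [Fintype.sum_prod_type]
  simp only [← Finset.sum_mul, ← Finset.mul_sum]
  have hv : ∑ i : Fin Nv, (starRingEnd ℂ) (ula Nv Θ₁ i) * ula Nv Θ₂ i =
      (((Nv : ℝ)⁻¹ : ℝ) : ℂ) * (((Real.sin ((Θ₂ - Θ₁) * Nv / 2) / Real.sin ((Θ₂ - Θ₁) / 2) : ℝ)) : ℂ) *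
        Complex.exp (Complex.I * (((Θ₂ - Θ₁) * ((Nv : ℝ) - 1) / 2 : ℝ) : ℂ)) := by
    rw [Finset.sum_congr rfl fun i _ => conj_ula_mul Nv Θ₁ Θ₂ i, ← Finset.mul_sum,
      dirichlet Nv (Θ₂ - Θ₁) hΘ]
    ring
  have hh : ∑ j : Fin Nh, (starRingEnd ℂ) (ula Nh Φ₁ j) * ula Nh Φ₂ j =
      (((Nh : ℝ)⁻¹ : ℝ) : ℂ) * (((Real.sin ((Φ₂ - Φ₁) * Nh / 2) / Real.sin ((Φ₂ - Φ₁) / 2) : ℝ)) : ℂ) *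
        Complex.exp (Complex.I * (((Φ₂ - Φ₁) * ((Nh : ℝ) - 1) / 2 : ℝ) : ℂ)) := by
    rw [Finset.sum_congr rfl fun j _ => conj_ula_mul Nh Φ₁ Φ₂ j, ← Finset.mul_sum,
      dirichlet Nh (Φ₂ - Φ₁) hΦ]
    ring
  rw [hv, hh]
  have hE : Complex.exp (Complex.I * (((Θ₂ - Θ₁) * ((Nv : ℝ) - 1) / 2 : ℝ) : ℂ)) *
      Complex.exp (Complex.I * (((Φ₂ - Φ₁) * ((Nh : ℝ) - 1) / 2 : ℝ) : ℂ)) =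
      Complex.exp (Complex.I *
        ((1 / 2 * ((Θ₂ - Θ₁) * ((Nv : ℝ) - 1) + (Φ₂ - Φ₁) * ((Nh : ℝ) - 1)) : ℝ) : ℂ)) := by
    rw [← Complex.exp_add]
    congr 1
    push_cast
    ring
  rw [← hE]
  push_cast
  ring

lemma vIdx_succ (M s : ℕ) (hM : 0 < M) : vIdx M (s + 1) = s / M + 1 := by
  unfold vIdx
  rw [show s + 1 + M - 1 = s + M by omega, Nat.add_div_right _ hM]

lemma hIdx_succ (M s : ℕ) (hM : 0 < M) : hIdx M (s + 1) = s % M + 1 := by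
  unfold hIdx
  rw [vIdx_succ M s hM, Nat.add_sub_cancel, mul_comm]
  have h1 : M * (s / M) + s % M = s := Nat.div_add_mod s M
  have h2 : s % M < M := Nat.mod_lt s hM
  generalize M * (s / M) = t at *
  generalize s % M = r at *
  omega

lemma sqrt_norm (NRv NRh : ℕ) :
    (1 / Real.sqrt NRv : ℝ) * (1 / Real.sqrt NRh) * ((1 / Real.sqrt NRv) * (1 / Real.sqrt NRh))
      = ((NRv * NRh : ℕ) : ℝ)⁻¹ := by
  rw [div_mul_div_comm, div_mul_div_comm, one_mul, one_mul]
  rw [show Real.sqrt NRv * Real.sqrt NRh * (Real.sqrt NRv * Real.sqrt NRh)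
      = (Real.sqrt NRv * Real.sqrt NRv) * (Real.sqrt NRh * Real.sqrt NRh) by ring,
    Real.mul_self_sqrt (Nat.cast_nonneg _), Real.mul_self_sqrt (Nat.cast_nonneg _), one_div]
  push_cast; ring

lemma ris_term (NRv NRh : ℕ) (hRh : 0 < NRh) (ψ : Fin (NRv * NRh) → ℝ)
    (Θlr Φlr Θit Φit : ℝ) (s : Fin (NRv * NRh)) :
    (starRingEnd ℂ) (upa NRv NRh Θlr Φlr s) * upa NRv NRh Θit Φit s *
        (starRingEnd ℂ) (Complex.exp (Complex.I * (ψ s : ℂ))) =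
      ((((NRv * NRh : ℕ) : ℝ)⁻¹ : ℝ) : ℂ) *
        Complex.exp (-(Complex.I *
          ((Ωph NRh (ψ s) ((s : ℕ) + 1) Θlr Θit Φlr Φit : ℝ) : ℂ))) := by
  have hv : ((vIdx NRh ((s : ℕ) + 1) : ℕ) : ℂ) - 1 = (((s : ℕ) / NRh : ℕ) : ℂ) := by
    rw [vIdx_succ NRh (s : ℕ) hRh]; push_cast; ring
  have hhh : ((hIdx NRh ((s : ℕ) + 1) : ℕ) : ℂ) - 1 = (((s : ℕ) % NRh : ℕ) : ℂ) := by
    rw [hIdx_succ NRh (s : ℕ) hRh]; push_cast; ring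
  unfold upa kron ula
  simp only [finProdFinEquiv, Equiv.coe_fn_symm_mk, Fin.coe_divNat, Fin.coe_modNat,
    map_mul, Complex.conj_ofReal, ← Complex.exp_conj, Complex.conj_I, map_natCast, map_ofNat]
  have hexp : Complex.exp (-Complex.I * ((Θlr : ℂ) * (((s : ℕ) / NRh : ℕ) : ℂ))) *
      Complex.exp (-Complex.I * ((Φlr : ℂ) * (((s : ℕ) % NRh : ℕ) : ℂ))) *
      Complex.exp (Complex.I * ((Θit : ℂ) * (((s : ℕ) / NRh : ℕ) : ℂ))) *
      Complex.exp (Complex.I * ((Φit : ℂ) * (((s : ℕ) % NRh : ℕ) : ℂ))) *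
      Complex.exp (-Complex.I * ((ψ s : ℝ) : ℂ)) =
      Complex.exp (-(Complex.I *
        ((Ωph NRh (ψ s) ((s : ℕ) + 1) Θlr Θit Φlr Φit : ℝ) : ℂ))) := by
    rw [← Complex.exp_add, ← Complex.exp_add, ← Complex.exp_add, ← Complex.exp_add]
    congr 1
    unfold Ωph
    push_cast
    linear_combination (Complex.I * ((Θlr : ℂ) - (Θit : ℂ))) * hv +
      (Complex.I * ((Φlr : ℂ) - (Φit : ℂ))) * hhh
  have hc : ((1 / Real.sqrt NRv : ℝ) : ℂ) * ((1 / Real.sqrt NRh : ℝ) : ℂ) *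
      (((1 / Real.sqrt NRv : ℝ) : ℂ) * ((1 / Real.sqrt NRh : ℝ) : ℂ)) =
      ((((NRv * NRh : ℕ) : ℝ)⁻¹ : ℝ) : ℂ) := by
    exact_mod_cast congrArg (fun r : ℝ => (r : ℂ)) (sqrt_norm NRv NRh)
  calc _ = (((1 / Real.sqrt NRv : ℝ) : ℂ) * ((1 / Real.sqrt NRh : ℝ) : ℂ) *
        (((1 / Real.sqrt NRv : ℝ) : ℂ) * ((1 / Real.sqrt NRh : ℝ) : ℂ))) *
        (Complex.exp (-Complex.I * ((Θlr : ℂ) * (((s : ℕ) / NRh : ℕ) : ℂ))) *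
        Complex.exp (-Complex.I * ((Φlr : ℂ) * (((s : ℕ) % NRh : ℕ) : ℂ))) *
        Complex.exp (Complex.I * ((Θit : ℂ) * (((s : ℕ) / NRh : ℕ) : ℂ))) *
        Complex.exp (Complex.I * ((Φit : ℂ) * (((s : ℕ) % NRh : ℕ) : ℂ))) *
        Complex.exp (-Complex.I * ((ψ s : ℝ) : ℂ))) := by ring
    _ = _ := by rw [hexp, hc]

/-- inner product of two cascaded direction vectors (eq. (A-2) of the paper). -/
theorem cascaded_direction_inner_product (NBv NBh NRv NRh : ℕ)
    (hBv : 0 < NBv) (hBh : 0 < NBh) (hRv : 0 < NRv) (hRh : 0 < NRh)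
    (ψ : Fin (NRv * NRh) → ℝ)
    (Θl₁ Φl₁ Θlr₁ Φlr₁ Θit₁ Φit₁ Θl₂ Φl₂ Θlr₂ Φlr₂ Θit₂ Φit₂ : ℝ)
    (hΘ : Real.sin ((Θl₂ - Θl₁) / 2) ≠ 0) (hΦ : Real.sin ((Φl₂ - Φl₁) / 2) ≠ 0) :
    ∑ nb : Fin (NBv * NBh),
        (starRingEnd ℂ) (casDir NBv NBh NRv NRh ψ Θl₁ Φl₁ Θlr₁ Φlr₁ Θit₁ Φit₁ nb) *
          casDir NBv NBh NRv NRh ψ Θl₂ Φl₂ Θlr₂ Φlr₂ Θit₂ Φit₂ nb =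
      ((Real.sin ((Θl₂ - Θl₁) * (NBv : ℝ) / 2) * Real.sin ((Φl₂ - Φl₁) * (NBh : ℝ) / 2) /
          (Real.sin ((Θl₂ - Θl₁) / 2) * Real.sin ((Φl₂ - Φl₁) / 2)) : ℝ) : ℂ) *
        Complex.exp (Complex.I *
          ((1 / 2 * ((Θl₂ - Θl₁) * ((NBv : ℝ) - 1) + (Φl₂ - Φl₁) * ((NBh : ℝ) - 1)) : ℝ) : ℂ)) /
        (((NBv * NBh : ℕ) : ℂ) * ((NRv * NRh : ℕ) : ℂ) ^ 2) *
        ∑ s : Fin (NRv * NRh), ∑ c : Fin (NRv * NRh),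
          Complex.exp (Complex.I *
            ((Ωph NRh (ψ s) ((s : ℕ) + 1) Θlr₁ Θit₁ Φlr₁ Φit₁ -
              Ωph NRh (ψ c) ((c : ℕ) + 1) Θlr₂ Θit₂ Φlr₂ Φit₂ : ℝ) : ℂ)) := by
  set S₁ := ∑ s : Fin (NRv * NRh),
      (starRingEnd ℂ) (upa NRv NRh Θlr₁ Φlr₁ s) * upa NRv NRh Θit₁ Φit₁ s *
        (starRingEnd ℂ) (Complex.exp (Complex.I * (ψ s : ℂ))) with hS₁
  set S₂ := ∑ s : Fin (NRv * NRh),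
      (starRingEnd ℂ) (upa NRv NRh Θlr₂ Φlr₂ s) * upa NRv NRh Θit₂ Φit₂ s *
        (starRingEnd ℂ) (Complex.exp (Complex.I * (ψ s : ℂ))) with hS₂
  have hfac : ∑ nb : Fin (NBv * NBh),
        (starRingEnd ℂ) (casDir NBv NBh NRv NRh ψ Θl₁ Φl₁ Θlr₁ Φlr₁ Θit₁ Φit₁ nb) *
          casDir NBv NBh NRv NRh ψ Θl₂ Φl₂ Θlr₂ Φlr₂ Θit₂ Φit₂ nb =
      (∑ nb : Fin (NBv * NBh),
        (starRingEnd ℂ) (upa NBv NBh Θl₁ Φl₁ nb) * upa NBv NBh Θl₂ Φl₂ nb) *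
        ((starRingEnd ℂ) S₁ * S₂) := by
    rw [Finset.sum_mul]
    refine Finset.sum_congr rfl fun nb _ => ?_
    simp only [casDir, map_mul, hS₁, hS₂]
    ring
  have h1 : S₁ = ((((NRv * NRh : ℕ) : ℝ)⁻¹ : ℝ) : ℂ) *
      ∑ s : Fin (NRv * NRh), Complex.exp (-(Complex.I *
        ((Ωph NRh (ψ s) ((s : ℕ) + 1) Θlr₁ Θit₁ Φlr₁ Φit₁ : ℝ) : ℂ))) := by
    rw [hS₁, Finset.mul_sum]
    exact Finset.sum_congr rfl fun s _ => ris_term NRv NRh hRh ψ Θlr₁ Φlr₁ Θit₁ Φit₁ s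
  have h2 : S₂ = ((((NRv * NRh : ℕ) : ℝ)⁻¹ : ℝ) : ℂ) *
      ∑ c : Fin (NRv * NRh), Complex.exp (-(Complex.I *
        ((Ωph NRh (ψ c) ((c : ℕ) + 1) Θlr₂ Θit₂ Φlr₂ Φit₂ : ℝ) : ℂ))) := by
    rw [hS₂, Finset.mul_sum]
    exact Finset.sum_congr rfl fun c _ => ris_term NRv NRh hRh ψ Θlr₂ Φlr₂ Θit₂ Φit₂ c
  have hc1 : (starRingEnd ℂ) S₁ = ((((NRv * NRh : ℕ) : ℝ)⁻¹ : ℝ) : ℂ) *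
      ∑ s : Fin (NRv * NRh), Complex.exp (Complex.I *
        ((Ωph NRh (ψ s) ((s : ℕ) + 1) Θlr₁ Θit₁ Φlr₁ Φit₁ : ℝ) : ℂ)) := by
    rw [h1, map_mul, Complex.conj_ofReal, map_sum]
    congr 1
    refine Finset.sum_congr rfl fun s _ => ?_
    rw [← Complex.exp_conj]
    congr 1
    simp [Complex.conj_I, Complex.conj_ofReal]
  have hprod : (starRingEnd ℂ) S₁ * S₂ =
      ((((NRv * NRh : ℕ) : ℝ)⁻¹ : ℝ) : ℂ) * ((((NRv * NRh : ℕ) : ℝ)⁻¹ : ℝ) : ℂ) *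
      ∑ s : Fin (NRv * NRh), ∑ c : Fin (NRv * NRh),
        Complex.exp (Complex.I *
          ((Ωph NRh (ψ s) ((s : ℕ) + 1) Θlr₁ Θit₁ Φlr₁ Φit₁ -
            Ωph NRh (ψ c) ((c : ℕ) + 1) Θlr₂ Θit₂ Φlr₂ Φit₂ : ℝ) : ℂ)) := by
    rw [hc1, h2, mul_mul_mul_comm, Finset.sum_mul_sum]
    congr 1
    refine Finset.sum_congr rfl fun s _ => ?_
    refine Finset.sum_congr rfl fun c _ => ?_
    rw [← Complex.exp_add]
    congr 1
    push_cast
    ring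
  rw [hfac, hprod, upa_inner NBv NBh Θl₁ Φl₁ Θl₂ Φl₂ hΘ hΦ]
  push_cast
  ring
end

section
/- Let N_{B,v}, N_{B,h}, N_{R,v}, N_{R,h} be positive integers with N_R = N_{R,v}N_{R,h}, let Θ₁, Φ₁, Θ_{1,r}, Φ_{1,r}, Θ_{1,t}, Φ_{1,t} be reals, and let the reflection phases ψ_s be designed by the optimal rule ψ_s := ψ_c + (v_{N_{R,h}}(c) − v_{N_{R,h}}(s))(Θ_{1,r} − Θ_{1,t}) + (h_{N_{R,h}}(c) − h_{N_{R,h}}(s))(Φ_{1,r} − Φ_{1,t}) for a fixed reference index c and real ψ_c. Then the cascaded LoS direction vector a_{E,1} := a_B(Θ₁,Φ₁)·(a_R(Θ_{1,r},Φ_{1,r})^H · diag(a_R(Θ_{1,t},Φ_{1,t})) · conj(ψ)), with ψ := (e^{iψ₁},…,e^{iψ_{N_R}})^T, has unit norm: a_{E,1}^H a_{E,1} = 1. -/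
lemma ula_conj_mul (N : ℕ) (Zr Zt : ℝ) (n : Fin N) :
    (starRingEnd ℂ) (ula N Zr n) * ula N Zt n
      = (1 / (N : ℂ)) * Complex.exp (Complex.I * (((Zt - Zr : ℝ) : ℂ) * ((n : ℕ) : ℂ))) := by
  unfold ula
  rw [map_mul, Complex.conj_ofReal, ← Complex.exp_conj]
  have h1 : (starRingEnd ℂ) (Complex.I * ((Zr : ℂ) * ((n : ℕ) : ℂ)))
      = -(Complex.I * ((Zr : ℂ) * ((n : ℕ) : ℂ))) := by
    rw [map_mul, Complex.conj_I, map_mul]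
    rw [Complex.conj_ofReal]
    rw [← Complex.ofReal_natCast, Complex.conj_ofReal]
    ring
  rw [h1]
  rw [mul_mul_mul_comm, ← Complex.exp_add]
  congr 1
  · rw [← Complex.ofReal_mul, div_mul_div_comm, one_mul,
      Real.mul_self_sqrt (Nat.cast_nonneg N)]
    push_cast; ring
  · push_cast; ring

lemma upa_conj_mul (Nv Nh : ℕ) (Θr Φr Θt Φt : ℝ) (s : Fin (Nv * Nh)) :
    (starRingEnd ℂ) (upa Nv Nh Θr Φr s) * upa Nv Nh Θt Φt s
      = (1 / ((Nv : ℂ) * (Nh : ℂ))) *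
        Complex.exp (Complex.I * (((Θt - Θr : ℝ) : ℂ) * (((s : ℕ) / Nh : ℕ) : ℂ)
          + ((Φt - Φr : ℝ) : ℂ) * (((s : ℕ) % Nh : ℕ) : ℂ))) := by
  unfold upa kron
  rw [map_mul, mul_mul_mul_comm, ula_conj_mul, ula_conj_mul]
  have hv : (((finProdFinEquiv.symm s).1 : ℕ) : ℂ) = (((s : ℕ) / Nh : ℕ) : ℂ) := by
    simp [finProdFinEquiv, Fin.coe_divNat]
  have hh : (((finProdFinEquiv.symm s).2 : ℕ) : ℂ) = (((s : ℕ) % Nh : ℕ) : ℂ) := by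
    simp [finProdFinEquiv, Fin.coe_modNat]
  rw [hv, hh, mul_mul_mul_comm, ← Complex.exp_add, div_mul_div_comm, one_mul]
  congr 1
  ring

/-- with the optimal reflection-phase design, the cascaded LoS
direction vector has unit norm: `a_{E,1}ᴴ a_{E,1} = 1`. -/
theorem cascaded_los_direction_unit_norm (NBv NBh NRv NRh : ℕ)
    (hBv : 0 < NBv) (hBh : 0 < NBh) (hRv : 0 < NRv) (hRh : 0 < NRh)
    (Θ₁ Φ₁ Θ1r Φ1r Θ1t Φ1t : ℝ)
    (c : Fin (NRv * NRh)) (ψc : ℝ) (ψ : Fin (NRv * NRh) → ℝ)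
    (hψ : ∀ s : Fin (NRv * NRh),
      ψ s = ψc + ((vIdx NRh ((c : ℕ) + 1) : ℝ) - (vIdx NRh ((s : ℕ) + 1) : ℝ)) * (Θ1r - Θ1t)
               + ((hIdx NRh ((c : ℕ) + 1) : ℝ) - (hIdx NRh ((s : ℕ) + 1) : ℝ)) * (Φ1r - Φ1t)) :
    ∑ nb : Fin (NBv * NBh),
        (starRingEnd ℂ) (casDir NBv NBh NRv NRh ψ Θ₁ Φ₁ Θ1r Φ1r Θ1t Φ1t nb) *
          casDir NBv NBh NRv NRh ψ Θ₁ Φ₁ Θ1r Φ1r Θ1t Φ1t nb = 1 := by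
  set K : ℝ := ((vIdx NRh ((c : ℕ) + 1) : ℝ) - 1) * (Θ1t - Θ1r)
      + ((hIdx NRh ((c : ℕ) + 1) : ℝ) - 1) * (Φ1t - Φ1r) - ψc with hK
  -- the inner sum equals a unit-modulus constant
  have hterm : ∀ s : Fin (NRv * NRh),
      (starRingEnd ℂ) (upa NRv NRh Θ1r Φ1r s) * upa NRv NRh Θ1t Φ1t s *
        (starRingEnd ℂ) (Complex.exp (Complex.I * (ψ s : ℂ)))
      = (1 / ((NRv : ℂ) * (NRh : ℂ))) * Complex.exp (Complex.I * (K : ℂ)) := by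
    intro s
    rw [upa_conj_mul]
    rw [← Complex.exp_conj]
    have hc1 : (starRingEnd ℂ) (Complex.I * (ψ s : ℂ)) = -(Complex.I * (ψ s : ℂ)) := by
      rw [map_mul, Complex.conj_I, Complex.conj_ofReal]; ring
    rw [hc1, mul_assoc, ← Complex.exp_add]
    congr 2
    have hv := vIdx_succ NRh (s : ℕ) hRh
    have hh := hIdx_succ NRh (s : ℕ) hRh
    have hψs := hψ s
    rw [hv, hh] at hψs
    push_cast [hψs, hK]
    ring
  have hS : ∑ s : Fin (NRv * NRh),
      (starRingEnd ℂ) (upa NRv NRh Θ1r Φ1r s) * upa NRv NRh Θ1t Φ1t s *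
        (starRingEnd ℂ) (Complex.exp (Complex.I * (ψ s : ℂ)))
      = Complex.exp (Complex.I * (K : ℂ)) := by
    rw [Finset.sum_congr rfl (fun s _ => hterm s), Finset.sum_const, Finset.card_univ,
      Fintype.card_fin, nsmul_eq_mul]
    have h1 : ((NRv * NRh : ℕ) : ℂ) = (NRv : ℂ) * (NRh : ℂ) := by push_cast; ring
    have h2 : (NRv : ℂ) * (NRh : ℂ) ≠ 0 := by
      simp only [ne_eq, mul_eq_zero, Nat.cast_eq_zero, not_or]
      omega
    rw [h1, ← mul_assoc, mul_one_div, div_self h2, one_mul]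
  -- norm of the BS steering vector is one
  have hB : ∑ nb : Fin (NBv * NBh),
      (starRingEnd ℂ) (upa NBv NBh Θ₁ Φ₁ nb) * upa NBv NBh Θ₁ Φ₁ nb = 1 := by
    have : ∀ nb : Fin (NBv * NBh),
        (starRingEnd ℂ) (upa NBv NBh Θ₁ Φ₁ nb) * upa NBv NBh Θ₁ Φ₁ nb
        = 1 / ((NBv : ℂ) * (NBh : ℂ)) := by
      intro nb
      rw [upa_conj_mul]
      simp
    rw [Finset.sum_congr rfl (fun nb _ => this nb), Finset.sum_const, Finset.card_univ,
      Fintype.card_fin, nsmul_eq_mul]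
    have h1 : ((NBv * NBh : ℕ) : ℂ) = (NBv : ℂ) * (NBh : ℂ) := by push_cast; ring
    have h2 : (NBv : ℂ) * (NBh : ℂ) ≠ 0 := by
      simp only [ne_eq, mul_eq_zero, Nat.cast_eq_zero, not_or]
      omega
    rw [h1, mul_one_div, div_self h2]
  -- put things together
  unfold casDir
  calc ∑ nb : Fin (NBv * NBh),
        (starRingEnd ℂ) (upa NBv NBh Θ₁ Φ₁ nb *
          ∑ s : Fin (NRv * NRh),
            (starRingEnd ℂ) (upa NRv NRh Θ1r Φ1r s) * upa NRv NRh Θ1t Φ1t s *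
              (starRingEnd ℂ) (Complex.exp (Complex.I * (ψ s : ℂ)))) *
        (upa NBv NBh Θ₁ Φ₁ nb *
          ∑ s : Fin (NRv * NRh),
            (starRingEnd ℂ) (upa NRv NRh Θ1r Φ1r s) * upa NRv NRh Θ1t Φ1t s *
              (starRingEnd ℂ) (Complex.exp (Complex.I * (ψ s : ℂ))))
      = ∑ nb : Fin (NBv * NBh),
          ((starRingEnd ℂ) (upa NBv NBh Θ₁ Φ₁ nb) * upa NBv NBh Θ₁ Φ₁ nb) *
          ((starRingEnd ℂ) (Complex.exp (Complex.I * (K : ℂ))) *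
            Complex.exp (Complex.I * (K : ℂ))) := by
        refine Finset.sum_congr rfl (fun nb _ => ?_)
        rw [hS, map_mul]; ring
    _ = 1 := by
        rw [← Finset.sum_mul, hB, one_mul, ← Complex.exp_conj]
        rw [map_mul, Complex.conj_I, Complex.conj_ofReal, ← Complex.exp_add]
        simp
end

section
/- Let a, c be nonzero complex numbers, let b be a positive integer, and set ε_i := i·2π/2^b for i ∈ {1,…,2^b}. If i* ∈ {1,…,2^b} maximizes |a·e^{iε_i} + c| over i ∈ {1,…,2^b}, then the circular distance between the arguments of a·e^{iε_{i*}} and c is at most π/2^b, i.e., |arg(a·e^{iε_{i*}} · conj(c))| ≤ π/2^b. -/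
/-- if `i*` maximizes `|a·e^{iε_i} + c|` over the uniform phase grid
`ε_i = i·2π/2^b`, `i ∈ {1,…,2^b}`, then the circular distance between the arguments of
`a·e^{iε_{i*}}` and `c` is at most `π/2^b`. -/
theorem phase_quantization_error (a c : ℂ) (ha : a ≠ 0) (hc : c ≠ 0)
    (b : ℕ) (hb : 0 < b)
    (ε : ℕ → ℝ) (hε : ∀ i : ℕ, ε i = (i : ℝ) * (2 * Real.pi) / 2 ^ b)
    (istar : ℕ) (histar : istar ∈ Finset.Icc 1 (2 ^ b))
    (hmax : ∀ j ∈ Finset.Icc 1 (2 ^ b),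
      ‖a * Complex.exp (Complex.I * (ε j : ℂ)) + c‖ ≤
        ‖a * Complex.exp (Complex.I * (ε istar : ℂ)) + c‖) :
    |(a * Complex.exp (Complex.I * (ε istar : ℂ)) * (starRingEnd ℂ) c).arg| ≤
      Real.pi / 2 ^ b := by
  have pi_pos := Real.pi_pos
  set n : ℕ := 2 ^ b with hn
  have hn2 : (2:ℕ) ≤ n := by
    calc (2:ℕ) = 2 ^ 1 := by norm_num
    _ ≤ 2 ^ b := Nat.pow_le_pow_right (by norm_num) hb
  have hnR : (0:ℝ) < (n:ℝ) := by positivity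
  set δ : ℝ := 2 * Real.pi / n with hδ
  have hδpos : 0 < δ := by positivity
  have hδ2 : δ / 2 = Real.pi / n := by rw [hδ]; ring
  have hδ2π : δ / 2 ≤ Real.pi := by
    rw [hδ2]
    have hn1R : (1:ℝ) ≤ (n:ℝ) := by exact_mod_cast Nat.one_le_of_lt hn2
    rw [div_le_iff₀ hnR]
    nlinarith
  have hnδ : (n:ℝ) * δ = 2 * Real.pi := by
    rw [hδ]; field_simp
  set w : ℂ := a * (starRingEnd ℂ) c with hw
  have hw0 : w ≠ 0 := mul_ne_zero ha (by simpa using hc)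
  set r : ℝ := ‖w‖ with hr
  have hr0 : 0 < r := by
    rw [hr]; exact norm_pos_iff.mpr hw0
  set φ : ℝ := w.arg with hφ
  -- real part computation
  have hre : ∀ t : ℝ, (a * Complex.exp (Complex.I * (t:ℂ)) * (starRingEnd ℂ) c).re
      = r * Real.cos (φ + t) := by
    intro t
    have h1 : a * Complex.exp (Complex.I * (t:ℂ)) * (starRingEnd ℂ) c
        = w * Complex.exp (Complex.I * (t:ℂ)) := by rw [hw]; ring
    have h2 : w * Complex.exp (Complex.I * (t:ℂ))
        = (r:ℂ) * Complex.exp (((φ + t : ℝ) : ℂ) * Complex.I) := by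
      conv_lhs => rw [← Complex.norm_mul_exp_arg_mul_I w]
      rw [← hr, ← hφ, mul_assoc, ← Complex.exp_add]
      congr 2
      push_cast
      ring
    rw [h1, h2]
    rw [Complex.re_ofReal_mul, Complex.exp_ofReal_mul_I_re]
  -- squared modulus expansion
  have habs2 : ∀ t : ℝ, (‖a * Complex.exp (Complex.I * (t:ℂ)) + c‖)^2
      = (‖a‖)^2 + (‖c‖)^2 + 2 * (r * Real.cos (φ + t)) := by
    intro t
    rw [Complex.sq_norm, Complex.normSq_add, ← hre t]
    have he : ‖Complex.exp (Complex.I * (t:ℂ))‖ = 1 := by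
      rw [Complex.norm_exp]
      simp
    have : Complex.normSq (a * Complex.exp (Complex.I * (t:ℂ))) = Complex.normSq a := by
      rw [← Complex.sq_norm, ← Complex.sq_norm, norm_mul, he, mul_one]
    rw [this, Complex.sq_norm, Complex.sq_norm]
  -- find a good grid point
  set m : ℤ := round (-φ / δ) with hm
  have hφm : |φ + (m:ℝ) * δ| ≤ δ / 2 := by
    have h := abs_sub_round (-φ / δ)
    have heq : φ + (m:ℝ) * δ = -((-φ/δ - (m:ℝ)) * δ) := by
      field_simp
      ring
    rw [heq, abs_neg, abs_mul, abs_of_pos hδpos]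
    calc |(-φ/δ) - (m:ℝ)| * δ ≤ (1/2) * δ := by
          apply mul_le_mul_of_nonneg_right h (le_of_lt hδpos)
    _ = δ/2 := by ring
  set j : ℤ := (m - 1) % (n:ℤ) + 1 with hj
  have hnZ : (0:ℤ) < (n:ℤ) := by exact_mod_cast Nat.lt_of_lt_of_le (by norm_num) hn2
  have hj1 : 1 ≤ j := by
    have := Int.emod_nonneg (m - 1) (ne_of_gt hnZ)
    omega
  have hjn : j ≤ (n:ℤ) := by
    have := Int.emod_lt_of_pos (m - 1) hnZ
    omega
  obtain ⟨k, hk⟩ : ∃ k : ℤ, j = m + k * (n:ℤ) := by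
    refine ⟨-((m-1) / (n:ℤ)), ?_⟩
    have := Int.emod_add_mul_ediv (m - 1) (n:ℤ)
    rw [hj]
    linarith [this]
  set jn : ℕ := j.toNat with hjn'
  have hjnc : ((jn:ℤ)) = j := Int.toNat_of_nonneg (by omega)
  have hjmem : jn ∈ Finset.Icc 1 n := by
    simp only [Finset.mem_Icc]
    omega
  -- cos at grid point jn is large
  have hεj : φ + ε jn = (φ + (m:ℝ) * δ) + (k:ℝ) * (2 * Real.pi) := by
    rw [hε jn]
    have hcast : ((jn:ℕ):ℝ) = ((j:ℤ):ℝ) := by exact_mod_cast hjnc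
    have : ((jn:ℕ):ℝ) * (2 * Real.pi) / 2 ^ b = ((j:ℤ):ℝ) * δ := by
      rw [hcast, hδ]
      push_cast [hn]
      ring
    rw [this, hk]
    push_cast
    have h5 : ((k:ℝ)*(n:ℝ))*δ = (k:ℝ)*(2*Real.pi) := by rw [mul_assoc, hnδ]
    nlinarith [h5]
  have hcosj : Real.cos (δ/2) ≤ Real.cos (φ + ε jn) := by
    rw [hεj, Real.cos_add_int_mul_two_pi, ← Real.cos_abs (φ + (m:ℝ)*δ)]
    exact Real.cos_le_cos_of_nonneg_of_le_pi (abs_nonneg _) hδ2π hφm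
  -- transfer to istar via maximality
  have hmaxj := hmax jn hjmem
  have hsq : (‖a * Complex.exp (Complex.I * (ε jn : ℂ)) + c‖)^2
      ≤ (‖a * Complex.exp (Complex.I * (ε istar : ℂ)) + c‖)^2 := by
    apply pow_le_pow_left₀ (norm_nonneg _) hmaxj
  rw [habs2, habs2] at hsq
  have hcos_star : Real.cos (δ/2) ≤ Real.cos (φ + ε istar) := by
    have : Real.cos (φ + ε jn) ≤ Real.cos (φ + ε istar) := by
      have := (mul_le_mul_iff_right₀ hr0).mp (by linarith : r * Real.cos (φ + ε jn) ≤ r * Real.cos (φ + ε istar))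
      exact this
    linarith
  -- conclude
  set z : ℂ := a * Complex.exp (Complex.I * (ε istar : ℂ)) * (starRingEnd ℂ) c with hz
  have hz0 : z ≠ 0 := by
    rw [hz]
    exact mul_ne_zero (mul_ne_zero ha (Complex.exp_ne_zero _)) (by simpa using hc)
  have hzabs : ‖z‖ = r := by
    rw [hz, hr, hw]
    rw [norm_mul, norm_mul, norm_mul]
    have : ‖Complex.exp (Complex.I * (ε istar : ℂ))‖ = 1 := by
      rw [Complex.norm_exp]; simp
    rw [this]; ring
  have hcosz : Real.cos z.arg = Real.cos (φ + ε istar) := by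
    rw [Complex.cos_arg hz0, hzabs, hz, hre (ε istar)]
    field_simp
  by_contra hcon
  push_neg at hcon
  have h1 : Real.pi / 2 ^ b = δ / 2 := by
    rw [hδ2, hn]; push_cast; ring
  rw [h1] at hcon
  have hlt : Real.cos |z.arg| < Real.cos (δ/2) := by
    apply Real.strictAntiOn_cos
    · exact Set.mem_Icc.mpr ⟨by positivity, hδ2π⟩
    · exact Set.mem_Icc.mpr ⟨abs_nonneg _, Complex.abs_arg_le_pi z⟩
    · exact hcon
  rw [Real.cos_abs] at hlt
  rw [hcosz] at hlt
  linarith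
end

section
/- Let v₁, v₂ be nonzero complex numbers with |arg(v₂ · conj(v₁))| < π. Then v₁ + v₂ ≠ 0 and |arg((v₁ + v₂) · conj(v₁))| ≤ |arg(v₂ · conj(v₁))|; i.e., the argument of the sum of two nonzero complex numbers deviates from the argument of either summand by no more than the angle between the two summands. -/
private lemma real_key (a b r : ℝ) (hr : 0 < r) :
    a * Real.sqrt ((a + r) ^ 2 + b ^ 2) ≤ (a + r) * Real.sqrt (a ^ 2 + b ^ 2) := by
  rcases le_or_gt 0 a with ha | ha
  · have ha' : (0:ℝ) ≤ a + r := by linarith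
    have e1 : a * Real.sqrt ((a + r) ^ 2 + b ^ 2)
        = Real.sqrt (a ^ 2 * ((a + r) ^ 2 + b ^ 2)) := by
      rw [Real.sqrt_mul (sq_nonneg a), Real.sqrt_sq ha]
    have e2 : (a + r) * Real.sqrt (a ^ 2 + b ^ 2)
        = Real.sqrt ((a + r) ^ 2 * (a ^ 2 + b ^ 2)) := by
      rw [Real.sqrt_mul (sq_nonneg (a + r)), Real.sqrt_sq ha']
    rw [e1, e2]
    apply Real.sqrt_le_sqrt
    have hsq : a ^ 2 ≤ (a + r) ^ 2 := by nlinarith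
    nlinarith [mul_le_mul_of_nonneg_right hsq (sq_nonneg b)]
  · rcases le_or_gt 0 (a + r) with ha' | ha'
    · have := Real.sqrt_nonneg ((a + r) ^ 2 + b ^ 2)
      have := Real.sqrt_nonneg (a ^ 2 + b ^ 2)
      nlinarith
    · have h1 : (0:ℝ) ≤ -(a + r) := by linarith
      have h2 : (0:ℝ) ≤ -a := by linarith
      rw [show a * Real.sqrt ((a + r) ^ 2 + b ^ 2) =
        -((-a) * Real.sqrt ((a + r) ^ 2 + b ^ 2)) by ring,
        show (a + r) * Real.sqrt (a ^ 2 + b ^ 2) =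
        -((-(a + r)) * Real.sqrt (a ^ 2 + b ^ 2)) by ring, neg_le_neg_iff]
      have e1 : -(a + r) * Real.sqrt (a ^ 2 + b ^ 2)
          = Real.sqrt ((a + r) ^ 2 * (a ^ 2 + b ^ 2)) := by
        rw [Real.sqrt_mul (sq_nonneg (a + r)), ← Real.sqrt_sq h1]
        ring_nf
      have e2 : -a * Real.sqrt ((a + r) ^ 2 + b ^ 2)
          = Real.sqrt (a ^ 2 * ((a + r) ^ 2 + b ^ 2)) := by
        rw [Real.sqrt_mul (sq_nonneg a), ← Real.sqrt_sq h2]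
        ring_nf
      rw [e1, e2]
      apply Real.sqrt_le_sqrt
      have hsq : (a + r) ^ 2 ≤ a ^ 2 := by nlinarith
      nlinarith [mul_le_mul_of_nonneg_right hsq (sq_nonneg b)]

private lemma abs_arg_le_of_cos (z₁ z₂ : ℂ) (hc : Real.cos z₂.arg ≤ Real.cos z₁.arg) :
    |z₁.arg| ≤ |z₂.arg| := by
  by_contra hlt
  push_neg at hlt
  have := Real.strictAntiOn_cos ⟨abs_nonneg _, Complex.abs_arg_le_pi z₂⟩
    ⟨abs_nonneg _, Complex.abs_arg_le_pi z₁⟩ hlt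
  rw [Real.cos_abs, Real.cos_abs] at this
  linarith

private lemma key (r : ℝ) (hr : 0 < r) (w : ℂ) (hw : w ≠ 0) (hw' : |w.arg| < Real.pi) :
    (r : ℂ) + w ≠ 0 ∧ |((r : ℂ) + w).arg| ≤ |w.arg| := by
  by_cases him : w.im = 0
  · -- w is real; since |arg w| < π and w ≠ 0, w.re > 0
    have hre : 0 < w.re := by
      rcases lt_trichotomy w.re 0 with h | h | h
      · exfalso
        have : w.arg = Real.pi := Complex.arg_eq_pi_iff.2 ⟨h, him⟩
        rw [this, abs_of_pos Real.pi_pos] at hw'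
        exact lt_irrefl _ hw'
      · exact absurd (Complex.ext h him) hw
      · exact h
    have hz : ((r : ℂ) + w).re = r + w.re := by simp
    have hzi : ((r : ℂ) + w).im = 0 := by simp [him]
    have hzre : 0 < ((r : ℂ) + w).re := by rw [hz]; linarith
    refine ⟨fun hc => by simp [hc] at hzre, ?_⟩
    have : ((r : ℂ) + w).arg = 0 := Complex.arg_eq_zero_iff.2 ⟨le_of_lt hzre, hzi⟩
    simp [this, abs_nonneg]
  · have hz : (r : ℂ) + w ≠ 0 := fun hc => him (by
      have : ((r : ℂ) + w).im = 0 := by rw [hc]; simp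
      simpa using this)
    refine ⟨hz, ?_⟩
    apply abs_arg_le_of_cos
    rw [Complex.cos_arg hw, Complex.cos_arg hz]
    have hAbs : ∀ z : ℂ, z ≠ 0 → 0 < ‖z‖ := fun z h => norm_pos_iff.mpr h
    rw [div_le_div_iff₀ (hAbs w hw) (hAbs _ hz)]
    have e1 : ‖(r : ℂ) + w‖ = Real.sqrt ((w.re + r) ^ 2 + w.im ^ 2) := by
      rw [Complex.norm_def, Complex.normSq_apply]
      congr 1
      simp
      ring
    have e2 : ‖w‖ = Real.sqrt (w.re ^ 2 + w.im ^ 2) := by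
      rw [Complex.norm_def, Complex.normSq_apply]
      congr 1
      ring
    have e3 : ((r : ℂ) + w).re = w.re + r := by simp; ring
    rw [e1, e2, e3]
    exact real_key w.re w.im r hr

/-- the argument of the sum of two nonzero complex numbers (at circular
argument distance `< π`) deviates from the argument of either summand by no more than
the angle between the summands. -/
theorem arg_sum_between (v₁ v₂ : ℂ) (h₁ : v₁ ≠ 0) (h₂ : v₂ ≠ 0)
    (h : |(v₂ * (starRingEnd ℂ) v₁).arg| < Real.pi) :
    v₁ + v₂ ≠ 0 ∧
      |((v₁ + v₂) * (starRingEnd ℂ) v₁).arg| ≤ |(v₂ * (starRingEnd ℂ) v₁).arg| := by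
  set w := v₂ * (starRingEnd ℂ) v₁ with hwdef
  have hw : w ≠ 0 := mul_ne_zero h₂ (by simpa using h₁)
  have hr : 0 < Complex.normSq v₁ := Complex.normSq_pos.2 h₁
  have heq : (v₁ + v₂) * (starRingEnd ℂ) v₁ = ((Complex.normSq v₁ : ℝ) : ℂ) + w := by
    rw [add_mul, Complex.mul_conj]
  obtain ⟨hne, hle⟩ := key (Complex.normSq v₁) hr w hw h
  rw [heq]
  refine ⟨fun hc => hne ?_, hle⟩
  rw [← heq, hc, zero_mul]
end

section
/- Let κ_B, κ_M > 0 and let L_B, L_M > 2 and b_N be real numbers; set m := L_B + L_M − 4. Define f(x) := κ_B·κ_M − κ_B·2^{−(b_N − x)/(L_M − 2)} − κ_M·2^{−x/(L_B − 2)} for x ∈ ℝ. Then f is strictly concave on ℝ and attains its unique global maximum at x† := b_N(L_B − 2)/m + ((L_M − 2)(L_B − 2)/m)·log₂(κ_M(L_M − 2)/(κ_B(L_B − 2))), and the maximum value is f(x†) = κ_B·κ_M − Q₆·2^{−b_N/m}, where Q₆ := κ_B·2^{((L_B−2)/m)·log₂(κ_M(L_M−2)/(κ_B(L_B−2)))}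 + κ_M·2^{−((L_M−2)/m)·log₂(κ_M(L_M−2)/(κ_B(L_B−2)))}. -/
private lemma aux_strictConvex (A c d : ℝ) (hA : 0 < A) (hc : c ≠ 0) :
    StrictConvexOn ℝ Set.univ (fun x : ℝ => A * (2 : ℝ) ^ (c * x + d)) := by
  refine ⟨convex_univ, ?_⟩
  intro x _ y _ hxy a b ha hb hab
  have hlog : Real.log 2 ≠ 0 := ne_of_gt (Real.log_pos one_lt_two)
  have hne : Real.log 2 * (c * x + d) ≠ Real.log 2 * (c * y + d) := by
    intro h
    have h1 : c * x + d = c * y + d := mul_left_cancel₀ hlog h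
    exact hxy (mul_left_cancel₀ hc (by linarith))
  have key := strictConvexOn_exp.2 (Set.mem_univ (Real.log 2 * (c * x + d)))
    (Set.mem_univ (Real.log 2 * (c * y + d))) hne ha hb hab
  simp only [smul_eq_mul] at key ⊢
  rw [Real.rpow_def_of_pos two_pos, Real.rpow_def_of_pos two_pos,
    Real.rpow_def_of_pos two_pos]
  have harg : Real.log 2 * (c * (a * x + b * y) + d) =
      a * (Real.log 2 * (c * x + d)) + b * (Real.log 2 * (c * y + d)) := by
    linear_combination (-(Real.log 2 * d)) * hab
  rw [harg]
  nlinarith [mul_lt_mul_of_pos_left key hA]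

/-- optimal bit partitioning between NLoS paths. The function
`f(x) = κ_B κ_M − κ_B·2^{−(b_N−x)/(L_M−2)} − κ_M·2^{−x/(L_B−2)}` is strictly concave,
has its unique global maximum at `x†`, and `f(x†) = κ_B κ_M − Q₆·2^{−b_N/m}`. -/
theorem nlos_bit_partition_optimum (κB κM LB LM bN : ℝ)
    (hκB : 0 < κB) (hκM : 0 < κM) (hLB : 2 < LB) (hLM : 2 < LM) :
    let m : ℝ := LB + LM - 4
    let f : ℝ → ℝ := fun x =>
      κB * κM - κB * (2 : ℝ) ^ (-(bN - x) / (LM - 2)) - κM * (2 : ℝ) ^ (-x / (LB - 2))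
    let xopt : ℝ := bN * (LB - 2) / m +
      (LM - 2) * (LB - 2) / m * Real.logb 2 (κM * (LM - 2) / (κB * (LB - 2)))
    let Q₆ : ℝ :=
      κB * (2 : ℝ) ^ ((LB - 2) / m * Real.logb 2 (κM * (LM - 2) / (κB * (LB - 2)))) +
      κM * (2 : ℝ) ^ (-((LM - 2) / m) * Real.logb 2 (κM * (LM - 2) / (κB * (LB - 2))))
    StrictConcaveOn ℝ Set.univ f ∧
      (∀ x : ℝ, x ≠ xopt → f x < f xopt) ∧
      f xopt = κB * κM - Q₆ * (2 : ℝ) ^ (-bN / m) := by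
  intro m f xopt Q₆
  have hlM : (0 : ℝ) < LM - 2 := by linarith
  have hlB : (0 : ℝ) < LB - 2 := by linarith
  have hmdef : m = LB + LM - 4 := rfl
  have hm : (0 : ℝ) < m := by rw [hmdef]; linarith
  set L : ℝ := Real.logb 2 (κM * (LM - 2) / (κB * (LB - 2))) with hLdef
  have hxo : xopt = bN * (LB - 2) / m + (LM - 2) * (LB - 2) / m * L := rfl
  have hQ : Q₆ = κB * (2 : ℝ) ^ ((LB - 2) / m * L) + κM * (2 : ℝ) ^ (-((LM - 2) / m) * L) := rfl
  have hR : (0 : ℝ) < κM * (LM - 2) / (κB * (LB - 2)) := by positivity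
  have h2L : (2 : ℝ) ^ L = κM * (LM - 2) / (κB * (LB - 2)) :=
    Real.rpow_logb two_pos (by norm_num) hR
  -- exponent identities at the optimum
  have hE1 : -(bN - xopt) / (LM - 2) = (LB - 2) / m * L + -bN / m := by
    rw [hxo, hmdef]; field_simp [show LB + LM - 4 ≠ 0 by linarith]; ring
  have hE2 : -xopt / (LB - 2) = -((LM - 2) / m) * L + -bN / m := by
    rw [hxo, hmdef]; field_simp; ring
  have hv1 : (2 : ℝ) ^ (-(bN - xopt) / (LM - 2)) =
      (2 : ℝ) ^ ((LB - 2) / m * L) * (2 : ℝ) ^ (-bN / m) := by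
    rw [hE1, Real.rpow_add two_pos]
  have hv2 : (2 : ℝ) ^ (-xopt / (LB - 2)) =
      (2 : ℝ) ^ (-((LM - 2) / m) * L) * (2 : ℝ) ^ (-bN / m) := by
    rw [hE2, Real.rpow_add two_pos]
  -- strict concavity
  have h1 : StrictConvexOn ℝ Set.univ (fun x : ℝ => κB * (2 : ℝ) ^ (-(bN - x) / (LM - 2))) := by
    refine (aux_strictConvex κB (1 / (LM - 2)) (-(bN / (LM - 2))) hκB
      (one_div_ne_zero hlM.ne')).congr fun x _ => ?_
    congr 1; ring
  have h2 : StrictConvexOn ℝ Set.univ (fun x : ℝ => κM * (2 : ℝ) ^ (-x / (LB - 2))) := by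
    refine (aux_strictConvex κM (-(1 / (LB - 2))) 0 hκM
      (neg_ne_zero.mpr (one_div_ne_zero hlB.ne'))).congr fun x _ => ?_
    congr 1; ring
  have hconc : StrictConcaveOn ℝ Set.univ f := by
    have h := ((concaveOn_const (κB * κM) convex_univ).sub_strictConvexOn h1).sub h2
    exact h.congr fun x _ => rfl
  refine ⟨hconc, ?_, ?_⟩
  · -- unique maximum
    intro x hx
    have hu : x - xopt ≠ 0 := sub_ne_zero.mpr hx
    have hlog : Real.log 2 ≠ 0 := ne_of_gt (Real.log_pos one_lt_two)
    -- stationarity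
    have hsum : (LB - 2) / m * L = -((LM - 2) / m) * L + L := by
      rw [hmdef]; field_simp [show LB + LM - 4 ≠ 0 by linarith]; ring
    have hstat : κB * (2 : ℝ) ^ (-(bN - xopt) / (LM - 2)) / (LM - 2) =
        κM * (2 : ℝ) ^ (-xopt / (LB - 2)) / (LB - 2) := by
      rw [hv1, hv2, hsum, Real.rpow_add two_pos, h2L]
      field_simp
    have p1 : Real.log 2 * ((x - xopt) / (LM - 2)) + 1 < (2 : ℝ) ^ ((x - xopt) / (LM - 2)) := by
      rw [Real.rpow_def_of_pos two_pos]
      exact Real.add_one_lt_exp (mul_ne_zero hlog (div_ne_zero hu hlM.ne'))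
    have p2 : Real.log 2 * (-(x - xopt) / (LB - 2)) + 1 <
        (2 : ℝ) ^ (-(x - xopt) / (LB - 2)) := by
      rw [Real.rpow_def_of_pos two_pos]
      exact Real.add_one_lt_exp (mul_ne_zero hlog
        (div_ne_zero (neg_ne_zero.mpr hu) hlB.ne'))
    have d1 : (2 : ℝ) ^ (-(bN - x) / (LM - 2)) =
        (2 : ℝ) ^ (-(bN - xopt) / (LM - 2)) * (2 : ℝ) ^ ((x - xopt) / (LM - 2)) := by
      rw [← Real.rpow_add two_pos]; congr 1; ring
    have d2 : (2 : ℝ) ^ (-x / (LB - 2)) =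
        (2 : ℝ) ^ (-xopt / (LB - 2)) * (2 : ℝ) ^ (-(x - xopt) / (LB - 2)) := by
      rw [← Real.rpow_add two_pos]; congr 1; ring
    have hc1 : (0 : ℝ) < κB * (2 : ℝ) ^ (-(bN - xopt) / (LM - 2)) := by positivity
    have hc2 : (0 : ℝ) < κM * (2 : ℝ) ^ (-xopt / (LB - 2)) := by positivity
    have q1 := mul_lt_mul_of_pos_left p1 hc1
    have q2 := mul_lt_mul_of_pos_left p2 hc2
    have hz : Real.log 2 * (x - xopt) * (κB * (2 : ℝ) ^ (-(bN - xopt) / (LM - 2)) / (LM - 2)) =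
        Real.log 2 * (x - xopt) * (κM * (2 : ℝ) ^ (-xopt / (LB - 2)) / (LB - 2)) := by
      rw [hstat]
    have hfx : f x = κB * κM - κB * (2 : ℝ) ^ (-(bN - x) / (LM - 2)) -
        κM * (2 : ℝ) ^ (-x / (LB - 2)) := rfl
    have hfo : f xopt = κB * κM - κB * (2 : ℝ) ^ (-(bN - xopt) / (LM - 2)) -
        κM * (2 : ℝ) ^ (-xopt / (LB - 2)) := rfl
    have expand : κB * (2 : ℝ) ^ (-(bN - xopt) / (LM - 2)) *
          (Real.log 2 * ((x - xopt) / (LM - 2)) + 1) +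
        κM * (2 : ℝ) ^ (-xopt / (LB - 2)) *
          (Real.log 2 * (-(x - xopt) / (LB - 2)) + 1) =
        κB * (2 : ℝ) ^ (-(bN - xopt) / (LM - 2)) +
        κM * (2 : ℝ) ^ (-xopt / (LB - 2)) := by
      linear_combination hz
    have key : κB * (2 : ℝ) ^ (-(bN - xopt) / (LM - 2)) +
        κM * (2 : ℝ) ^ (-xopt / (LB - 2)) <
        κB * ((2 : ℝ) ^ (-(bN - xopt) / (LM - 2)) * (2 : ℝ) ^ ((x - xopt) / (LM - 2))) +
        κM * ((2 : ℝ) ^ (-xopt / (LB - 2)) * (2 : ℝ) ^ (-(x - xopt) / (LB - 2))) := by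
      have h := add_lt_add q1 q2
      rw [expand] at h
      calc κB * (2 : ℝ) ^ (-(bN - xopt) / (LM - 2)) + κM * (2 : ℝ) ^ (-xopt / (LB - 2))
          < κB * (2 : ℝ) ^ (-(bN - xopt) / (LM - 2)) * (2 : ℝ) ^ ((x - xopt) / (LM - 2)) +
            κM * (2 : ℝ) ^ (-xopt / (LB - 2)) * (2 : ℝ) ^ (-(x - xopt) / (LB - 2)) := h
        _ = _ := by ring
    rw [hfx, hfo, d1, d2]
    linarith [key]
  · -- value at the optimum
    have hfo : f xopt = κB * κM - κB * (2 : ℝ) ^ (-(bN - xopt) / (LM - 2)) -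
        κM * (2 : ℝ) ^ (-xopt / (LB - 2)) := rfl
    rw [hfo, hv1, hv2, hQ]
    ring
end
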